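/- Let K ⊆ ℝⁿ be a nonempty closed set and p : ℝⁿ → ℝ a real polynomial of degree d ≥ 1 with leading term p^∞ (the degree-d homogeneous part of p). The following are equivalent: (i) p is bounded from below on K and there exist x̄ ∈ K and a nonempty closed set S ⊆ ℝⁿ with ({x ∈ K : p(x) ≤ p(x̄)})_∞ ⊆ S_∞ ⊆ K_∞ such that SOL(S_∞, p^∞) is bounded; (ii) the set SOL(K, p) of global minimizers of p on K is nonempty and bounded. -/

import Mathlib

/-!
If `p` is bounded below on `K`, dividing `p (x k)` by `t k ^ d` along a sequence defining
`v ∈ K_∞` shows `p^∞ v ≥ 0`; likewise `p^∞ ≤ 0` on the asymptotic cone of a sublevel set `L` of `p`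
on `K`. If `L` were unbounded it would contain a unit direction `v` with `p^∞ v = 0`, and since
`v ∈ S_∞ ⊆ K_∞` the whole ray `ℝ₊ v` would minimise `p^∞` on the cone `S_∞`, contradicting the
boundedness of `SOL(S_∞, p^∞)`. Hence `L` is compact, a minimiser of `p` on `L` is a global one on
`K`, and `SOL(K, p) ⊆ L`. Conversely, for a minimiser `x̄` take `S = {x̄}`: the sublevel set at `x̄`
is `SOL(K, p)`, which is bounded, so all the asymptotic cones involved are `{0}`.
-/

open Filter Topology MvPolynomial Bornology

noncomputable section

/-- The asymptotic (recession) cone of a set `A ⊆ ℝⁿ`. -/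
def asymCone {n : ℕ} (A : Set (Fin n → ℝ)) : Set (Fin n → ℝ) :=
  {v | ∃ (t : ℕ → ℝ) (x : ℕ → (Fin n → ℝ)),
    Filter.Tendsto t Filter.atTop Filter.atTop ∧ (∀ k, x k ∈ A) ∧
    Filter.Tendsto (fun k => (t k)⁻¹ • x k) Filter.atTop (nhds v)}

/-- Pareto efficient solutions of the vector map `g` on `C`. -/
def SOLs {n q : ℕ} (C : Set (Fin n → ℝ)) (g : Fin q → (Fin n → ℝ) → ℝ) :
    Set (Fin n → ℝ) :=
  {x | x ∈ C ∧ ¬ ∃ y ∈ C, (∀ i, g i y ≤ g i x) ∧ (∃ i, g i y ≠ g i x)}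

/-- Weak Pareto efficient solutions of the vector map `g` on `C`. -/
def SOLw {n q : ℕ} (C : Set (Fin n → ℝ)) (g : Fin q → (Fin n → ℝ) → ℝ) :
    Set (Fin n → ℝ) :=
  {x | x ∈ C ∧ ¬ ∃ y ∈ C, ∀ i, g i y < g i x}

/-- Global minimizers of a scalar function `p` on `C`. -/
def SOLmin {n : ℕ} (C : Set (Fin n → ℝ)) (p : (Fin n → ℝ) → ℝ) :
    Set (Fin n → ℝ) :=
  {x | x ∈ C ∧ ∀ y ∈ C, p x ≤ p y}

/-- The recession polynomial (leading term: top-degree homogeneous part) of a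
polynomial, as a function on `ℝⁿ`. -/
noncomputable def recPoly {n : ℕ} (p : MvPolynomial (Fin n) ℝ) : (Fin n → ℝ) → ℝ :=
  fun x => MvPolynomial.eval x (MvPolynomial.homogeneousComponent p.totalDegree p)

theorem MvPolynomial.IsHomogeneous.eval_smul {σ R : Type*} [CommSemiring R]
    {q : MvPolynomial σ R} {m : ℕ} (hq : q.IsHomogeneous m) (c : R) (x : σ → R) :
    eval (c • x) q = c ^ m * eval x q := by
  rw [eval_eq, eval_eq, Finset.mul_sum]
  refine Finset.sum_congr rfl fun d hd => ?_
  simp_rw [Pi.smul_apply, smul_eq_mul, mul_pow, Finset.prod_mul_distrib,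
    Finset.prod_pow_eq_pow_sum, ← hq.degree_eq_sum_deg_support hd]
  ring

section Polynomial

variable {n : ℕ} (p : MvPolynomial (Fin n) ℝ)

lemma recPoly_smul (c : ℝ) (x : Fin n → ℝ) :
    recPoly p (c • x) = c ^ p.totalDegree * recPoly p x :=
  (homogeneousComponent_isHomogeneous _ p).eval_smul c x

lemma pow_totalDegree_mul_eval (s : ℝ) (x : Fin n → ℝ) :
    s ^ p.totalDegree * eval x p = ∑ i ∈ Finset.range (p.totalDegree + 1),
      s ^ (p.totalDegree - i) * eval (s • x) (homogeneousComponent i p) := by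
  conv_lhs => enter [2]; rw [← p.sum_homogeneousComponent]
  rw [map_sum, Finset.mul_sum]
  refine Finset.sum_congr rfl fun i hi => ?_
  rw [(homogeneousComponent_isHomogeneous i p).eval_smul, ← mul_assoc, ← pow_add,
    Nat.sub_add_cancel (Finset.mem_range_succ_iff.mp hi)]

/-- The right-hand side of `pow_totalDegree_mul_eval` is jointly continuous in `(s, s • x)`, and at
`s = 0` only the top homogeneous component survives. -/
lemma tendsto_inv_pow_mul_eval {t : ℕ → ℝ} {x : ℕ → Fin n → ℝ} {v : Fin n → ℝ}
    (ht : Tendsto t atTop atTop) (hx : Tendsto (fun k => (t k)⁻¹ • x k) atTop (𝓝 v)) :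
    Tendsto (fun k => (t k)⁻¹ ^ p.totalDegree * eval (x k) p) atTop (𝓝 (recPoly p v)) := by
  set g : ℝ × (Fin n → ℝ) → ℝ := fun q => ∑ i ∈ Finset.range (p.totalDegree + 1),
    q.1 ^ (p.totalDegree - i) * eval q.2 (homogeneousComponent i p)
  have hg : Continuous g :=
    continuous_finsetSum _ fun i _ =>
      (continuous_fst.pow _).mul ((continuous_eval _).comp continuous_snd)
  have hg0 : g (0, v) = recPoly p v := by
    simp only [g]
    rw [Finset.sum_eq_single_of_mem _ (Finset.self_mem_range_succ _)]
    · simp [recPoly]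
    · intro i hi hne
      rw [zero_pow (by have := Finset.mem_range.mp hi; omega), zero_mul]
  have hlim := (hg.tendsto (0, v)).comp (ht.inv_tendsto_atTop.prodMk_nhds hx)
  rw [hg0] at hlim
  exact hlim.congr fun k => (pow_totalDegree_mul_eval p _ _).symm

end Polynomial

section AsymptoticCone

variable {n : ℕ}

lemma asymCone_mono {A B : Set (Fin n → ℝ)} (h : A ⊆ B) : asymCone A ⊆ asymCone B := by
  rintro v ⟨t, x, ht, hx, hlim⟩
  exact ⟨t, x, ht, fun k => h (hx k), hlim⟩

lemma smul_mem_asymCone {A : Set (Fin n → ℝ)} {c : ℝ} (hc : 0 < c) {v : Fin n → ℝ}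
    (hv : v ∈ asymCone A) : c • v ∈ asymCone A := by
  obtain ⟨t, x, ht, hx, hlim⟩ := hv
  refine ⟨fun k => c⁻¹ * t k, x, ht.const_mul_atTop (inv_pos.2 hc), hx, ?_⟩
  simpa only [mul_inv, inv_inv, mul_smul] using hlim.const_smul c

lemma asymCone_eq_singleton_zero {A : Set (Fin n → ℝ)} (hne : A.Nonempty)
    (hbdd : IsBounded A) : asymCone A = {0} := by
  obtain ⟨R, hR⟩ := hbdd.exists_norm_le
  refine Set.Subset.antisymm ?_ (Set.singleton_subset_iff.2 ?_)
  · rintro v ⟨t, x, ht, hx, hlim⟩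
    have hzero : Tendsto (fun k => (t k)⁻¹ • x k) atTop (𝓝 0) := by
      refine squeeze_zero_norm' ?_ (by simpa using ht.inv_tendsto_atTop.mul_const R)
      filter_upwards [ht.eventually_gt_atTop 0] with k hk
      rw [norm_smul, norm_inv, Real.norm_of_nonneg hk.le]
      exact mul_le_mul_of_nonneg_left (hR _ (hx k)) (inv_nonneg.2 hk.le)
    exact tendsto_nhds_unique hlim (by simpa using hzero)
  · obtain ⟨a, ha⟩ := hne
    refine ⟨fun k => k, fun _ => a, tendsto_natCast_atTop_atTop, fun _ => ha, ?_⟩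
    have h := ((tendsto_inv_atTop_zero (𝕜 := ℝ)).comp tendsto_natCast_atTop_atTop).smul_const a
    rwa [zero_smul] at h

lemma exists_norm_eq_one_mem_asymCone {A : Set (Fin n → ℝ)} (hA : ¬ IsBounded A) :
    ∃ v, ‖v‖ = 1 ∧ v ∈ asymCone A := by
  have hfar : ∀ k : ℕ, ∃ x ∈ A, (k : ℝ) < ‖x‖ := fun k => by
    by_contra! h
    exact hA (isBounded_iff_forall_norm_le.2 ⟨k, h⟩)
  choose x hxA hxk using hfar
  have hpos : ∀ k, 0 < ‖x k‖ := fun k => (Nat.cast_nonneg k).trans_lt (hxk k)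
  have hsphere : ∀ k, ‖x k‖⁻¹ • x k ∈ Metric.sphere (0 : Fin n → ℝ) 1 := fun k => by
    rw [mem_sphere_zero_iff_norm, norm_smul, norm_inv, norm_norm, inv_mul_cancel₀ (hpos k).ne']
  obtain ⟨v, hv, φ, hφ, hlim⟩ := (isCompact_sphere (0 : Fin n → ℝ) 1).tendsto_subseq hsphere
  refine ⟨v, mem_sphere_zero_iff_norm.mp hv, fun k => ‖x (φ k)‖, x ∘ φ, ?_, fun k => hxA _, hlim⟩
  refine tendsto_atTop_mono (fun k => ?_) tendsto_natCast_atTop_atTop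
  exact (Nat.cast_le.2 (hφ.le_apply)).trans (hxk (φ k)).le

end AsymptoticCone

section Minimizers

variable {n : ℕ}

lemma recPoly_nonneg_of_lower_bound {A : Set (Fin n → ℝ)} {p : MvPolynomial (Fin n) ℝ}
    (hdeg : 1 ≤ p.totalDegree) {m : ℝ} (hm : ∀ x ∈ A, m ≤ eval x p) {v : Fin n → ℝ}
    (hv : v ∈ asymCone A) : 0 ≤ recPoly p v := by
  obtain ⟨t, x, ht, hx, hlim⟩ := hv
  have hzero : Tendsto (fun k => (t k)⁻¹ ^ p.totalDegree * m) atTop (𝓝 0) := by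
    simpa [zero_pow (by omega : p.totalDegree ≠ 0)] using
      (ht.inv_tendsto_atTop.pow p.totalDegree).mul_const m
  refine le_of_tendsto_of_tendsto hzero (tendsto_inv_pow_mul_eval p ht hlim) ?_
  filter_upwards [ht.eventually_gt_atTop 0] with k hk
  exact mul_le_mul_of_nonneg_left (hm _ (hx k)) (by positivity)

lemma recPoly_nonpos_of_upper_bound {A : Set (Fin n → ℝ)} {p : MvPolynomial (Fin n) ℝ}
    (hdeg : 1 ≤ p.totalDegree) {c : ℝ} (hc : ∀ x ∈ A, eval x p ≤ c) {v : Fin n → ℝ}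
    (hv : v ∈ asymCone A) : recPoly p v ≤ 0 := by
  have h := recPoly_nonneg_of_lower_bound (p := -p) (m := -c) (by rwa [totalDegree_neg])
    (fun x hx => by simpa using hc x hx) hv
  simpa [recPoly, totalDegree_neg] using h

lemma not_isBounded_SOLmin_asymCone {A : Set (Fin n → ℝ)} {p : MvPolynomial (Fin n) ℝ}
    (hnonneg : ∀ w ∈ asymCone A, 0 ≤ recPoly p w) {v : Fin n → ℝ} (hv : v ∈ asymCone A)
    (hv0 : v ≠ 0) (hpv : recPoly p v = 0) : ¬ IsBounded (SOLmin (asymCone A) (recPoly p)) := by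
  intro hbdd
  obtain ⟨R, hR⟩ := hbdd.exists_norm_le
  have hnorm : 0 < ‖v‖ := norm_pos_iff.2 hv0
  set c := (|R| + 1) / ‖v‖
  have hc : 0 < c := by positivity
  have hray : c • v ∈ SOLmin (asymCone A) (recPoly p) := by
    refine ⟨smul_mem_asymCone hc hv, fun w hw => ?_⟩
    rw [recPoly_smul, hpv, mul_zero]
    exact hnonneg w hw
  have := hR _ hray
  rw [norm_smul, Real.norm_of_nonneg hc.le, div_mul_cancel₀ _ hnorm.ne'] at this
  linarith [le_abs_self R]

lemma isBounded_sublevel_of_isBounded_SOLmin_asymCone {K S : Set (Fin n → ℝ)}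
    {p : MvPolynomial (Fin n) ℝ} (hdeg : 1 ≤ p.totalDegree) {m c : ℝ}
    (hm : ∀ x ∈ K, m ≤ eval x p)
    (hLS : asymCone {x ∈ K | eval x p ≤ c} ⊆ asymCone S) (hSK : asymCone S ⊆ asymCone K)
    (hS : IsBounded (SOLmin (asymCone S) (recPoly p))) :
    IsBounded {x ∈ K | eval x p ≤ c} := by
  by_contra hL
  obtain ⟨v, hv1, hvL⟩ := exists_norm_eq_one_mem_asymCone hL
  have hnonneg : ∀ w ∈ asymCone S, 0 ≤ recPoly p w :=
    fun w hw => recPoly_nonneg_of_lower_bound hdeg hm (hSK hw)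
  have hpv : recPoly p v = 0 :=
    le_antisymm (recPoly_nonpos_of_upper_bound hdeg (fun x hx => hx.2) hvL) (hnonneg v (hLS hvL))
  exact not_isBounded_SOLmin_asymCone hnonneg (hLS hvL) (by rintro rfl; simp at hv1) hpv hS

lemma SOLmin_subset_sublevel {K : Set (Fin n → ℝ)} {f : (Fin n → ℝ) → ℝ} {x₀ : Fin n → ℝ}
    (hx₀ : x₀ ∈ K) : SOLmin K f ⊆ {x ∈ K | f x ≤ f x₀} :=
  fun _ hx => ⟨hx.1, hx.2 x₀ hx₀⟩

lemma sublevel_eq_SOLmin {K : Set (Fin n → ℝ)} {f : (Fin n → ℝ) → ℝ} {x₀ : Fin n → ℝ}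
    (hx₀ : x₀ ∈ SOLmin K f) : {x ∈ K | f x ≤ f x₀} = SOLmin K f :=
  Set.Subset.antisymm (fun _ hx => ⟨hx.1, fun y hy => hx.2.trans (hx₀.2 y hy)⟩)
    (SOLmin_subset_sublevel hx₀.1)

lemma SOLmin_nonempty_and_isBounded_of_isBounded_sublevel {K : Set (Fin n → ℝ)}
    {f : (Fin n → ℝ) → ℝ} (hf : Continuous f) (hK : IsClosed K) {x₀ : Fin n → ℝ} (hx₀ : x₀ ∈ K)
    (hL : IsBounded {x ∈ K | f x ≤ f x₀}) :
    (SOLmin K f).Nonempty ∧ IsBounded (SOLmin K f) := by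
  have hLc : IsCompact {x ∈ K | f x ≤ f x₀} :=
    Metric.isCompact_of_isClosed_isBounded (hK.inter (isClosed_le hf continuous_const)) hL
  obtain ⟨xs, hxs, hmin⟩ := hLc.exists_isMinOn ⟨x₀, hx₀, le_rfl⟩ hf.continuousOn
  refine ⟨⟨xs, hxs.1, fun y hy => ?_⟩, hL.subset (SOLmin_subset_sublevel hx₀)⟩
  by_cases hy₀ : f y ≤ f x₀
  · exact hmin ⟨hy, hy₀⟩
  · exact (hmin ⟨hx₀, le_rfl⟩).trans (le_of_not_ge hy₀)

end Minimizers

theorem stmt17_general {n : ℕ} (K : Set (Fin n → ℝ)) (hKcl : IsClosed K)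
    (p : MvPolynomial (Fin n) ℝ) (hdeg : 1 ≤ p.totalDegree) :
    ((∃ m : ℝ, ∀ x ∈ K, m ≤ eval x p) ∧
      ∃ xbar ∈ K, ∃ S : Set (Fin n → ℝ), S.Nonempty ∧ IsClosed S ∧
        asymCone {x ∈ K | eval x p ≤ eval xbar p} ⊆ asymCone S ∧
        asymCone S ⊆ asymCone K ∧
        Bornology.IsBounded (SOLmin (asymCone S) (recPoly p))) ↔
    ((SOLmin K (fun x => eval x p)).Nonempty ∧
      Bornology.IsBounded (SOLmin K (fun x => eval x p))) := by
  constructor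
  · rintro ⟨⟨m, hm⟩, xbar, hxbar, S, -, -, hLS, hSK, hS⟩
    exact SOLmin_nonempty_and_isBounded_of_isBounded_sublevel (continuous_eval p) hKcl hxbar
      (isBounded_sublevel_of_isBounded_SOLmin_asymCone hdeg hm hLS hSK hS)
  · rintro ⟨⟨xs, hxs⟩, hbdd⟩
    have hcone : asymCone {xs} = {0} :=
      asymCone_eq_singleton_zero (Set.singleton_nonempty xs) isBounded_singleton
    refine ⟨⟨eval xs p, hxs.2⟩, xs, hxs.1, {xs}, Set.singleton_nonempty xs, isClosed_singleton,
      ?_, asymCone_mono (Set.singleton_subset_iff.2 hxs.1), ?_⟩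
    · rw [sublevel_eq_SOLmin hxs, asymCone_eq_singleton_zero ⟨xs, hxs⟩ hbdd, hcone]
    · rw [hcone]
      exact isBounded_singleton.subset fun _ hv => hv.1

theorem stmt17 {n : ℕ} (K : Set (Fin n → ℝ)) (hKne : K.Nonempty) (hKcl : IsClosed K)
    (p : MvPolynomial (Fin n) ℝ) (hdeg : 1 ≤ p.totalDegree) :
    ((∃ m : ℝ, ∀ x ∈ K, m ≤ eval x p) ∧
      ∃ xbar ∈ K, ∃ S : Set (Fin n → ℝ), S.Nonempty ∧ IsClosed S ∧
        asymCone {x ∈ K | eval x p ≤ eval xbar p} ⊆ asymCone S ∧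
        asymCone S ⊆ asymCone K ∧
        Bornology.IsBounded (SOLmin (asymCone S) (recPoly p))) ↔
    ((SOLmin K (fun x => eval x p)).Nonempty ∧
      Bornology.IsBounded (SOLmin K (fun x => eval x p))) :=
  stmt17_general K hKcl p hdeg
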